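/- arXiv:1606.03638 — 2 statements merged into one kernel-verified Lean document; each statement's English description precedes it below -/
import Mathlib

section
/- The completely asymmetric pair Hamiltonian H^I(σ,τ) = -Σ_{i∈Λ} [J σ_i (τ_{i↑} + τ_{i→}) + q σ_i τ_i] on the two-dimensional discrete torus satisfies the dynamical balance condition: Σ_τ e^{-H^I(σ,τ)} = Σ_τ e^{-H^I(τ,σ)} for every configuration σ. -/
/-- spin value of a Boolean configuration entry -/
def spin (b : Bool) : ℝ := if b then 1 else -1

/-- the completely asymmetric pair Hamiltonian on the torus `(ℤ/Lℤ)²`: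
`H^I(σ,τ) = -Σ_i [J σ_i (τ_{i↑} + τ_{i→}) + q σ_i τ_i]`. -/
noncomputable def HI (L : ℕ) [NeZero L] (J q : ℝ) (σ τ : ZMod L × ZMod L → ℝ) : ℝ :=
  -∑ i : ZMod L × ZMod L,
    (J * σ i * (τ (i.1, i.2 + 1) + τ (i.1 + 1, i.2)) + q * σ i * τ i)

/-!
Summing out `τ` gives `Σ_τ e^{-H^I(σ,τ)} = ∏_i 2 cosh(J(σ_{i↓} + σ_{i←}) + q σ_i)`, and the
same with `↑, →` in place of `↓, ←` for `Σ_τ e^{-H^I(τ,σ)}`. Since `cosh` is even, the factor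
at `i` is `f(σ_{i↓}σ_i, σ_{i←}σ_i)` for a positive symmetric `f` on `{±1}²`, and such an `f` is
`exp(α + β(x + y) + γxy)`. So both products are exponentials of sums of bond variables, and
these sums agree by translating the torus (by `(1,1)` for the `xy` term, which is
`σ_{i↓}σ_{i←}` resp. `σ_{i↑}σ_{i→}`).
-/

open Finset Real

@[simp] lemma spin_true : spin true = 1 := rfl

@[simp] lemma spin_false : spin false = -1 := rfl

lemma spin_mul_self (b : Bool) : spin b * spin b = 1 := by
  cases b <;> norm_num

lemma spin_beq (a b : Bool) : spin (a == b) = spin a * spin b := by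
  cases a <;> cases b <;> norm_num

lemma spin_beq_mul_spin_beq (x y z : Bool) :
    spin (x == z) * spin (y == z) = spin x * spin y := by
  rw [spin_beq, spin_beq]
  linear_combination spin x * spin y * spin_mul_self z

lemma sum_exp_sum_spin_mul {ι : Type*} [Fintype ι] [DecidableEq ι] (c : ι → ℝ) :
    ∑ τ : ι → Bool, exp (∑ i, spin (τ i) * c i) = ∏ i, 2 * cosh (c i) := by
  simp_rw [exp_sum]
  rw [← Fintype.prod_sum (fun i b => exp (spin b * c i))]
  refine prod_congr rfl fun i _ => ?_
  rw [Fintype.sum_bool, spin_true, spin_false, one_mul, neg_one_mul, cosh_eq]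
  ring

lemma exists_eq_exp_spin_affine (f : Bool → Bool → ℝ) (hpos : ∀ a b, 0 < f a b)
    (hsymm : f true false = f false true) :
    ∃ α β γ : ℝ, ∀ a b, f a b = exp (α + β * (spin a + spin b) + γ * (spin a * spin b)) := by
  set l₁ := log (f true true)
  set l₂ := log (f true false)
  set l₃ := log (f false false)
  refine ⟨(l₁ + 2 * l₂ + l₃) / 4, (l₁ - l₃) / 4, (l₁ - 2 * l₂ + l₃) / 4, fun a b => ?_⟩
  rw [← exp_log (hpos a b)]
  congr 1
  cases a <;> cases b <;> simp only [spin_true, spin_false, ← hsymm] <;> ring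

theorem prod_eq_prod_of_sum_spin_eq {ι : Type*} [Fintype ι] (f : Bool → Bool → ℝ)
    (hpos : ∀ a b, 0 < f a b) (hsymm : f true false = f false true) (A B A' B' : ι → Bool)
    (hA : ∑ i, spin (A i) = ∑ i, spin (A' i)) (hB : ∑ i, spin (B i) = ∑ i, spin (B' i))
    (hAB : ∑ i, spin (A i) * spin (B i) = ∑ i, spin (A' i) * spin (B' i)) :
    ∏ i, f (A i) (B i) = ∏ i, f (A' i) (B' i) := by
  obtain ⟨α, β, γ, hf⟩ := exists_eq_exp_spin_affine f hpos hsymm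
  simp only [hf, ← exp_sum, sum_add_distrib, ← mul_sum, hA, hB, hAB]

lemma cosh_spin_eq_cosh_spin_beq (J q : ℝ) (x y z : Bool) :
    cosh (J * (spin x + spin y) + q * spin z)
      = cosh (J * (spin (x == z) + spin (y == z)) + q) := by
  cases z
  · rw [← cosh_neg]
    congr 1
    cases x <;> cases y <;> simp only [spin_beq, spin_true, spin_false] <;> ring
  · simp

section PairHamiltonian

variable {G : Type*} [AddCommGroup G] [Fintype G]

noncomputable def pairHamiltonian (a b : G) (J q : ℝ) (σ τ : G → ℝ) : ℝ :=
  -∑ i, (J * σ i * (τ (i + a) + τ (i + b)) + q * σ i * τ i)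

lemma sum_comp_sub_mul (c : G) (f g : G → ℝ) :
    ∑ i, f (i - c) * g i = ∑ i, f i * g (i + c) := by
  rw [← Equiv.sum_comp (Equiv.subRight c) (fun i => f i * g (i + c))]
  simp

lemma neg_pairHamiltonian_eq_sum_mul (a b : G) (J q : ℝ) (σ τ : G → ℝ) :
    -pairHamiltonian a b J q σ τ = ∑ i, τ i * (J * (σ (i - a) + σ (i - b)) + q * σ i) := by
  calc -pairHamiltonian a b J q σ τ
      = J * ∑ i, σ i * τ (i + a) + J * ∑ i, σ i * τ (i + b) + q * ∑ i, σ i * τ i := by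
        simp only [pairHamiltonian, neg_neg, mul_sum, ← sum_add_distrib]
        exact sum_congr rfl fun i _ => by ring
    _ = J * ∑ i, σ (i - a) * τ i + J * ∑ i, σ (i - b) * τ i + q * ∑ i, σ i * τ i := by
        simp only [sum_comp_sub_mul]
    _ = ∑ i, τ i * (J * (σ (i - a) + σ (i - b)) + q * σ i) := by
        simp only [mul_sum, ← sum_add_distrib]
        exact sum_congr rfl fun i _ => by ring

lemma neg_pairHamiltonian_swap_eq_sum_mul (a b : G) (J q : ℝ) (σ τ : G → ℝ) :
    -pairHamiltonian a b J q τ σ = ∑ i, τ i * (J * (σ (i + a) + σ (i + b)) + q * σ i) := by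
  rw [pairHamiltonian, neg_neg]
  exact sum_congr rfl fun i _ => by ring

lemma sum_spin_beq_comp_sub_eq (σ : G → Bool) (c : G) :
    ∑ i, spin (σ (i - c) == σ i) = ∑ i, spin (σ (i + c) == σ i) := by
  simp only [spin_beq]
  rw [← Equiv.sum_comp (Equiv.addRight c)]
  simp [mul_comm]

theorem sum_exp_neg_pairHamiltonian_swap [DecidableEq G] (a b : G) (J q : ℝ) (σ : G → Bool) :
    ∑ τ : G → Bool, exp (-pairHamiltonian a b J q (fun i => spin (σ i)) (fun i => spin (τ i)))
      = ∑ τ : G → Bool,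
          exp (-pairHamiltonian a b J q (fun i => spin (τ i)) (fun i => spin (σ i))) := by
  set f : Bool → Bool → ℝ := fun x y => 2 * cosh (J * (spin x + spin y) + q)
  simp_rw [neg_pairHamiltonian_eq_sum_mul (σ := fun i => spin (σ i)),
    neg_pairHamiltonian_swap_eq_sum_mul (σ := fun i => spin (σ i)),
    sum_exp_sum_spin_mul, cosh_spin_eq_cosh_spin_beq]
  refine prod_eq_prod_of_sum_spin_eq f (fun _ _ => by positivity) (by simp only [f, add_comm])
    _ _ _ _ ?_ ?_ ?_
  · exact sum_spin_beq_comp_sub_eq σ a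
  · exact sum_spin_beq_comp_sub_eq σ b
  · simp only [spin_beq_mul_spin_beq]
    rw [← Equiv.sum_comp (Equiv.addRight (a + b))]
    refine sum_congr rfl fun i _ => ?_
    simp only [Equiv.coe_addRight]
    rw [mul_comm]
    congr 3 <;> abel

end PairHamiltonian

lemma HI_eq_pairHamiltonian (L : ℕ) [NeZero L] (J q : ℝ) (σ τ : ZMod L × ZMod L → ℝ) :
    HI L J q σ τ = pairHamiltonian (0, 1) (1, 0) J q σ τ := by
  simp [HI, pairHamiltonian, Prod.add_def]

/-- `H^I` satisfies the dynamical balance condition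
`Σ_τ e^{-H^I(σ,τ)} = Σ_τ e^{-H^I(τ,σ)}`. -/
theorem stmt_3 (L : ℕ) [NeZero L] (J q : ℝ) (σ : ZMod L × ZMod L → Bool) :
    (∑ τ : ZMod L × ZMod L → Bool,
        Real.exp (-(HI L J q (fun i => spin (σ i)) (fun i => spin (τ i)))))
      = ∑ τ : ZMod L × ZMod L → Bool,
        Real.exp (-(HI L J q (fun i => spin (τ i)) (fun i => spin (σ i)))) := by
  simpa only [HI_eq_pairHamiltonian] using sum_exp_neg_pairHamiltonian_swap (0, 1) (1, 0) J q σ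
end

section
/- The PCA stationary weight factorizes as w_PCA(σ) = w_G(σ) · f(σ) where f(σ) = Π_{i∈Λ}(1 + δ e^{-2 h_i(σ)σ_i}), provided Σ_{i∈Λ} h_i(σ)σ_i + G(σ) = -H(σ). Consequently π_PCA(σ) = π_G(σ) f(σ) / π_G(f), where π_G(f) = Σ_σ π_G(σ) f(σ). -/
/-- the pair Hamiltonian `H(σ,τ) = -Σ_i (h_i(σ)+qσ_i)τ_i - G(σ) + q|Λ|` -/
noncomputable def Hpair {Λ : Type*} [Fintype Λ] (h : Λ → (Λ → ℝ) → ℝ)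
    (G : (Λ → ℝ) → ℝ) (q : ℝ) (σ τ : Λ → ℝ) : ℝ :=
  -(∑ i, (h i σ + q * σ i) * τ i) - G σ + q * (Fintype.card Λ)

/-- `w_PCA(σ) = Σ_τ e^{-H(σ,τ)}` -/
noncomputable def wPCA {Λ : Type*} [Fintype Λ] [DecidableEq Λ] (h : Λ → (Λ → ℝ) → ℝ)
    (G : (Λ → ℝ) → ℝ) (q : ℝ) (σ : Λ → ℝ) : ℝ :=
  ∑ τ : Λ → Bool, Real.exp (-(Hpair h G q σ (fun i => spin (τ i))))

/-- `f(σ) = Π_i (1 + δ e^{-2 h_i(σ) σ_i})`, `δ = e^{-2q}` -/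
noncomputable def fwt {Λ : Type*} [Fintype Λ] (h : Λ → (Λ → ℝ) → ℝ) (q : ℝ)
    (σ : Λ → ℝ) : ℝ :=
  ∏ i, (1 + Real.exp (-(2 * q)) * Real.exp (-(2 * h i σ * σ i)))

/-!
Summing `e^{-H(σ,τ)}` over `τ` factorizes over the sites, since the exponent is linear in
`τ`: the site `i` contributes `e^{a_i} + e^{-a_i}` with `a_i = h_i(σ) + qσ_i`. As `σ_i = ±1`
this equals `e^{h_i(σ)σ_i + q} (1 + δ e^{-2h_i(σ)σ_i})`, and the prefactors
`e^{Σ_i h_i(σ)σ_i + q|Λ|}` and `e^{G(σ) - q|Λ|}` combine to `e^{-H(σ)}`. The statement about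
`π_PCA` follows by normalizing, as `π_G(f) = Σ_σ w_G(σ) f(σ) / Σ_σ w_G(σ)`.
-/

open Finset Real

lemma spin_eq_one_or_neg_one (b : Bool) : spin b = 1 ∨ spin b = -1 := by
  cases b <;> simp [spin]

lemma sum_bool_exp_mul_spin (c : ℝ) : ∑ b : Bool, exp (c * spin b) = exp c + exp (-c) := by
  simp [spin]

lemma sum_exp_sum_mul_spin {Λ : Type*} [Fintype Λ] [DecidableEq Λ] (c : Λ → ℝ) :
    ∑ τ : Λ → Bool, exp (∑ i, c i * spin (τ i)) = ∏ i, (exp (c i) + exp (-c i)) := by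
  simp_rw [exp_sum, ← sum_bool_exp_mul_spin, Fintype.prod_sum]

lemma exp_add_exp_neg_of_eq_one_or_neg_one (x q s : ℝ) (hs : s = 1 ∨ s = -1) :
    exp (x + q * s) + exp (-(x + q * s))
      = exp (x * s + q) * (1 + exp (-(2 * q)) * exp (-(2 * x * s))) := by
  rw [mul_add, mul_one, ← exp_add, ← exp_add]
  rcases hs with rfl | rfl <;> ring_nf

theorem wPCA_eq_exp_mul_fwt {Λ : Type*} [Fintype Λ] [DecidableEq Λ]
    (h : Λ → (Λ → ℝ) → ℝ) (G : (Λ → ℝ) → ℝ) (q : ℝ) (σ : Λ → ℝ)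
    (hσ : ∀ i, σ i = 1 ∨ σ i = -1) :
    wPCA h G q σ = exp (∑ i, h i σ * σ i + G σ) * fwt h q σ := by
  have hpair : ∀ τ, -Hpair h G q σ τ
      = ∑ i, (h i σ + q * σ i) * τ i + (G σ - q * Fintype.card Λ) := fun τ => by
    unfold Hpair
    ring
  simp_rw [wPCA, hpair, exp_add _ (G σ - _), ← sum_mul, sum_exp_sum_mul_spin,
    exp_add_exp_neg_of_eq_one_or_neg_one _ _ _ (hσ _), prod_mul_distrib, ← exp_sum, fwt]
  rw [mul_right_comm, ← exp_add, sum_add_distrib, sum_const, card_univ, nsmul_eq_mul]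
  ring_nf

lemma mul_div_sum_mul_eq_normalized {ι : Type*} [Fintype ι] (g f : ι → ℝ)
    (hg : ∑ j, g j ≠ 0) (i : ι) :
    g i * f i / ∑ j, g j * f j = g i / (∑ j, g j) * f i / ∑ j, g j / (∑ k, g k) * f j := by
  simp_rw [div_mul_eq_mul_div _ (∑ k, g k), ← sum_div, div_div_div_cancel_right₀ hg]

/-- provided `Σ_i h_i(σ)σ_i + G(σ) = -H(σ)` on configurations, the PCA weight
factorizes as `w_PCA(σ) = w_G(σ) f(σ)`, and consequently
`π_PCA(σ) = π_G(σ) f(σ)/π_G(f)`. -/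
theorem stmt_7 {Λ : Type*} [Fintype Λ] [DecidableEq Λ]
    (H : (Λ → ℝ) → ℝ) (h : Λ → (Λ → ℝ) → ℝ) (G : (Λ → ℝ) → ℝ) (q : ℝ)
    (hcomp : ∀ σ : Λ → Bool,
      (∑ i, h i (fun j => spin (σ j)) * spin (σ i)) + G (fun j => spin (σ j))
        = -H (fun j => spin (σ j)))
    (σ : Λ → Bool) :
    wPCA h G q (fun j => spin (σ j))
        = Real.exp (-H (fun j => spin (σ j))) * fwt h q (fun j => spin (σ j)) ∧
      wPCA h G q (fun j => spin (σ j)) /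
          (∑ σ' : Λ → Bool, wPCA h G q (fun j => spin (σ' j)))
        = (Real.exp (-H (fun j => spin (σ j))) /
              (∑ σ' : Λ → Bool, Real.exp (-H (fun j => spin (σ' j))))) *
            fwt h q (fun j => spin (σ j)) /
            (∑ σ' : Λ → Bool,
              (Real.exp (-H (fun j => spin (σ' j))) /
                  (∑ σ'' : Λ → Bool, Real.exp (-H (fun j => spin (σ'' j))))) *
                fwt h q (fun j => spin (σ' j))) := by
  have hfactor : ∀ σ : Λ → Bool, wPCA h G q (fun j => spin (σ j))
      = exp (-H (fun j => spin (σ j))) * fwt h q (fun j => spin (σ j)) := fun σ => by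
    rw [wPCA_eq_exp_mul_fwt h G q _ fun i => spin_eq_one_or_neg_one (σ i), hcomp]
  have hZ : ∑ σ' : Λ → Bool, exp (-H (fun j => spin (σ' j))) ≠ 0 :=
    (sum_pos (fun _ _ => exp_pos _) univ_nonempty).ne'
  refine ⟨hfactor σ, ?_⟩
  simp_rw [hfactor]
  have := mul_div_sum_mul_eq_normalized (fun σ : Λ → Bool => exp (-H fun j => spin (σ j)))
    (fun σ => fwt h q fun j => spin (σ j)) hZ σ
  simpa only using this
end
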